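/- Let R be a commutative ring, S a multiplicative subset of R, and 0 → A →f B →g C → 0 a u-S-split short exact sequence of R-modules. Then an R-module M is u-S-projective (resp. u-S-injective) relative to B if and only if M is u-S-projective (resp. u-S-injective) relative to both A and C. -/

import Mathlib

universe u v w

variable (R : Type u) [CommRing R]

/-- An `R`-module `T` is uniformly `S`-torsion if there is `s ∈ S` with `s • T = 0`. -/
def IsUSTorsion (S : Submonoid R) (T : Type*) [AddCommGroup T] [Module R T] : Prop :=
  ∃ s ∈ S, ∀ t : T, s • t = 0

/-- `f` is a `u`-`S`-epimorphism if its cokernel is uniformly `S`-torsion. -/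
def IsUSEpi (S : Submonoid R) {M N : Type*} [AddCommGroup M] [Module R M]
    [AddCommGroup N] [Module R N] (f : M →ₗ[R] N) : Prop :=
  IsUSTorsion R S (N ⧸ LinearMap.range f)

/-- `f` is a `u`-`S`-monomorphism if its kernel is uniformly `S`-torsion. -/
def IsUSMono (S : Submonoid R) {M N : Type*} [AddCommGroup M] [Module R M]
    [AddCommGroup N] [Module R N] (f : M →ₗ[R] N) : Prop :=
  IsUSTorsion R S (LinearMap.ker f)

/-- `P` is `u`-`S`-projective relative to `M` if for every `u`-`S`-epimorphism
`f : M → N`, the induced map `Hom(P,M) → Hom(P,N)` is a `u`-`S`-epimorphism. -/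
def IsUSProjRel (S : Submonoid R) (P : Type w) [AddCommGroup P] [Module R P]
    (M : Type v) [AddCommGroup M] [Module R M] : Prop :=
  ∀ (N : Type v) [AddCommGroup N] [Module R N] (f : M →ₗ[R] N),
    IsUSEpi R S f → IsUSEpi R S (LinearMap.llcomp (σ₁₂ := RingHom.id R) (σ₂₃ := RingHom.id R)
      (σ₁₃ := RingHom.id R) R P M N f)

/-- `E` is `u`-`S`-injective relative to `M` if for every `u`-`S`-monomorphism
`f : K → M`, the induced map `Hom(M,E) → Hom(K,E)` is a `u`-`S`-epimorphism. -/
def IsUSInjRel (S : Submonoid R) (E : Type w) [AddCommGroup E] [Module R E]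
    (M : Type v) [AddCommGroup M] [Module R M] : Prop :=
  ∀ (K : Type v) [AddCommGroup K] [Module R K] (f : K →ₗ[R] M),
    IsUSMono R S f → IsUSEpi R S (LinearMap.lcomp R E f)

lemma isUSEpi_iff' (S : Submonoid R) {M N : Type*} [AddCommGroup M] [Module R M]
    [AddCommGroup N] [Module R N] (f : M →ₗ[R] N) :
    IsUSEpi R S f ↔ ∃ s ∈ S, ∀ n : N, ∃ m, f m = s • n := by
  unfold IsUSEpi IsUSTorsion
  constructor
  · rintro ⟨s, hs, hsm⟩
    refine ⟨s, hs, fun n => ?_⟩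
    have h2 := hsm (Submodule.Quotient.mk n)
    rw [← Submodule.Quotient.mk_smul, Submodule.Quotient.mk_eq_zero] at h2
    exact h2
  · rintro ⟨s, hs, hsm⟩
    refine ⟨s, hs, fun q => ?_⟩
    obtain ⟨n, rfl⟩ := Submodule.Quotient.mk_surjective _ q
    rw [← Submodule.Quotient.mk_smul, Submodule.Quotient.mk_eq_zero]
    exact hsm n

lemma isUSMono_iff' (S : Submonoid R) {M N : Type*} [AddCommGroup M] [Module R M]
    [AddCommGroup N] [Module R N] (f : M →ₗ[R] N) :
    IsUSMono R S f ↔ ∃ s ∈ S, ∀ m : M, f m = 0 → s • m = 0 := by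
  unfold IsUSMono IsUSTorsion
  constructor
  · rintro ⟨s, hs, hsm⟩
    refine ⟨s, hs, fun m hm => ?_⟩
    exact congrArg Subtype.val (hsm ⟨m, hm⟩)
  · rintro ⟨s, hs, hsm⟩
    exact ⟨s, hs, fun t => Subtype.ext (hsm t.1 t.2)⟩

lemma exists_factor {B C X : Type*} [AddCommGroup B] [Module R B] [AddCommGroup C] [Module R C]
    [AddCommGroup X] [Module R X] (g : B →ₗ[R] C) (hg : Function.Surjective g)
    (u : B →ₗ[R] X) (hker : LinearMap.ker g ≤ LinearMap.ker u) :
    ∃ w : C →ₗ[R] X, w ∘ₗ g = u := by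
  refine ⟨(Submodule.liftQ _ u hker) ∘ₗ (g.quotKerEquivOfSurjective hg).symm.toLinearMap, ?_⟩
  ext b
  have he : (g.quotKerEquivOfSurjective hg).symm (g b) = Submodule.Quotient.mk b := by
    apply (g.quotKerEquivOfSurjective hg).injective
    rw [LinearEquiv.apply_symm_apply]
    simp [LinearMap.quotKerEquivOfSurjective, LinearMap.quotKerEquivRange]
  simp [he]

theorem stmt13 (S : Submonoid R) (hS : (0 : R) ∉ S)
    (A B C : Type v)
    [AddCommGroup A] [Module R A] [AddCommGroup B] [Module R B]
    [AddCommGroup C] [Module R C]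
    (f : A →ₗ[R] B) (g : B →ₗ[R] C)
    (hf : Function.Injective f) (hg : Function.Surjective g)
    (hex : LinearMap.range f = LinearMap.ker g)
    (hsplit : ∃ s ∈ S, ∃ f' : B →ₗ[R] A, f' ∘ₗ f = s • LinearMap.id)
    (M : Type w) [AddCommGroup M] [Module R M] :
    (IsUSProjRel R S M B ↔ IsUSProjRel R S M A ∧ IsUSProjRel R S M C) ∧
    (IsUSInjRel R S M B ↔ IsUSInjRel R S M A ∧ IsUSInjRel R S M C) := by
  obtain ⟨s₀, hs₀, f', hf'⟩ := hsplit
  have hf'f : ∀ a : A, f' (f a) = s₀ • a := fun a => by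
    simpa using LinearMap.congr_fun hf' a
  -- construct the quasi-section k of g
  have hkerk : LinearMap.ker g ≤
      LinearMap.ker (s₀ • (LinearMap.id : B →ₗ[R] B) - f ∘ₗ f') := by
    intro b hb
    obtain ⟨a, rfl⟩ := hex.ge hb
    simp [LinearMap.mem_ker, hf'f]
  obtain ⟨k, hk⟩ := exists_factor R g hg _ hkerk
  have hkg : ∀ b, k (g b) = s₀ • b - f (f' b) := fun b => by
    simpa using LinearMap.congr_fun hk b
  have hgfz : ∀ a : A, g (f a) = 0 := fun a => by
    have : f a ∈ LinearMap.ker g := hex.le (LinearMap.mem_range_self f a)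
    exact this
  have hgk : ∀ c, g (k c) = s₀ • c := by
    intro c
    obtain ⟨b, rfl⟩ := hg c
    rw [hkg]
    simp [hgfz]
  constructor
  · constructor
    · -- proj rel B → proj rel A ∧ proj rel C
      intro hB
      constructor
      · intro N _ _ h hepi
        have hb : IsUSEpi R S (h ∘ₗ f') := by
          rw [isUSEpi_iff'] at hepi ⊢
          obtain ⟨t, ht, hlift⟩ := hepi
          refine ⟨s₀ * t, S.mul_mem hs₀ ht, fun n => ?_⟩
          obtain ⟨a, ha⟩ := hlift n
          exact ⟨f a, by simp [hf'f, ha, mul_smul]⟩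
        have hll := hB N (h ∘ₗ f') hb
        rw [isUSEpi_iff'] at hll ⊢
        obtain ⟨s, hs, H⟩ := hll
        refine ⟨s, hs, fun φ => ?_⟩
        obtain ⟨ψ, hψ⟩ := H φ
        refine ⟨f' ∘ₗ ψ, ?_⟩
        ext m
        simpa using LinearMap.congr_fun hψ m
      · intro N _ _ h hepi
        have hb : IsUSEpi R S (h ∘ₗ g) := by
          rw [isUSEpi_iff'] at hepi ⊢
          obtain ⟨t, ht, hlift⟩ := hepi
          refine ⟨t, ht, fun n => ?_⟩
          obtain ⟨c, hc⟩ := hlift n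
          obtain ⟨b, rfl⟩ := hg c
          exact ⟨b, by simpa using hc⟩
        have hll := hB N (h ∘ₗ g) hb
        rw [isUSEpi_iff'] at hll ⊢
        obtain ⟨s, hs, H⟩ := hll
        refine ⟨s, hs, fun φ => ?_⟩
        obtain ⟨ψ, hψ⟩ := H φ
        refine ⟨g ∘ₗ ψ, ?_⟩
        ext m
        simpa using LinearMap.congr_fun hψ m
    · -- proj rel A ∧ proj rel C → proj rel B
      rintro ⟨hA, hC⟩
      intro N _ _ h hepi
      rw [isUSEpi_iff'] at hepi
      obtain ⟨t, ht, hlift⟩ := hepi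
      set π : N →ₗ[R] N ⧸ LinearMap.range (h ∘ₗ f) := Submodule.mkQ _ with hπ
      have hker1 : LinearMap.ker g ≤ LinearMap.ker (π ∘ₗ h) := by
        intro b hb
        obtain ⟨a, rfl⟩ := hex.ge hb
        have hmem : h (f a) ∈ LinearMap.range (h ∘ₗ f) := ⟨a, rfl⟩
        simp only [LinearMap.mem_ker, LinearMap.comp_apply, hπ, Submodule.mkQ_apply,
          Submodule.Quotient.mk_eq_zero]
        simpa using hmem
      obtain ⟨hbar, hhbar⟩ := exists_factor R g hg (π ∘ₗ h) hker1
      have hhbar' : ∀ b, hbar (g b) = π (h b) := fun b => LinearMap.congr_fun hhbar b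
      have hbarEpi : IsUSEpi R S hbar := by
        rw [isUSEpi_iff']
        refine ⟨t, ht, fun q => ?_⟩
        obtain ⟨n, rfl⟩ := Submodule.Quotient.mk_surjective _ q
        obtain ⟨b, hb⟩ := hlift n
        exact ⟨g b, by rw [hhbar', hb]; rw [map_smul]; rfl⟩
      obtain ⟨s₁, hs₁, H₁⟩ := (isUSEpi_iff' R S _).1 (hC _ hbar hbarEpi)
      have hrrEpi : IsUSEpi R S (h ∘ₗ f).rangeRestrict := by
        rw [isUSEpi_iff']
        refine ⟨1, S.one_mem, fun n => ?_⟩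
        obtain ⟨a, ha⟩ := (h ∘ₗ f).surjective_rangeRestrict n
        exact ⟨a, by simp [ha]⟩
      obtain ⟨s₂, hs₂, H₂⟩ :=
        (isUSEpi_iff' R S _).1 (hA _ (h ∘ₗ f).rangeRestrict hrrEpi)
      rw [isUSEpi_iff']
      refine ⟨s₂ * (s₀ * s₁), S.mul_mem hs₂ (S.mul_mem hs₀ hs₁), fun φ => ?_⟩
      obtain ⟨σ, hσ⟩ := H₁ (π ∘ₗ φ)
      have hδmem : ∀ m : M,
          (s₀ • s₁ • φ - h ∘ₗ (k ∘ₗ σ)) m ∈ LinearMap.range (h ∘ₗ f) := by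
        intro m
        have h4 : hbar (σ m) = s₁ • π (φ m) := by
          simpa using LinearMap.congr_fun hσ m
        have h5 : π (h (k (σ m))) = s₀ • s₁ • π (φ m) := by
          rw [← hhbar' (k (σ m)), hgk, map_smul, h4]
        rw [← Submodule.Quotient.mk_eq_zero, ← Submodule.mkQ_apply, ← hπ]
        simp only [map_sub, LinearMap.sub_apply, LinearMap.smul_apply, LinearMap.comp_apply,
          map_smul, h5]
        simp
      obtain ⟨τ, hτ⟩ := H₂ (LinearMap.codRestrict _ (s₀ • s₁ • φ - h ∘ₗ (k ∘ₗ σ)) hδmem)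
      refine ⟨s₂ • (k ∘ₗ σ) + f ∘ₗ τ, ?_⟩
      ext m
      have h7 := congrArg Subtype.val (LinearMap.congr_fun hτ m)
      simp only [LinearMap.llcomp_apply, LinearMap.rangeRestrict, LinearMap.codRestrict_apply,
        LinearMap.smul_apply, SetLike.val_smul, LinearMap.comp_apply, LinearMap.sub_apply] at h7
      -- h7 : h (f (τ m)) = s₂ • (s₀ • s₁ • φ m - h (k (σ m)))
      have hL : (LinearMap.llcomp R M B N h) (s₂ • (k ∘ₗ σ) + f ∘ₗ τ) m
          = s₂ • h (k (σ m)) + h (f (τ m)) := by simp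
      rw [hL, h7]
      simp only [LinearMap.smul_apply, smul_sub, mul_smul]
      abel
  · constructor
    · -- inj rel B → inj rel A ∧ inj rel C
      intro hB
      constructor
      · intro K _ _ j hmono
        rw [isUSMono_iff'] at hmono
        obtain ⟨t, ht, hker⟩ := hmono
        have h1 : IsUSMono R S (f ∘ₗ j) := by
          rw [isUSMono_iff']
          exact ⟨t, ht, fun x hx => hker x (hf (by simpa using hx))⟩
        have hll := hB K (f ∘ₗ j) h1
        rw [isUSEpi_iff'] at hll ⊢
        obtain ⟨s, hs, H⟩ := hll
        refine ⟨s, hs, fun φ => ?_⟩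
        obtain ⟨ψ, hψ⟩ := H φ
        refine ⟨ψ ∘ₗ f, ?_⟩
        ext x
        simpa using LinearMap.congr_fun hψ x
      · intro K _ _ j hmono
        rw [isUSMono_iff'] at hmono
        obtain ⟨t, ht, hker⟩ := hmono
        have h1 : IsUSMono R S (k ∘ₗ j) := by
          rw [isUSMono_iff']
          refine ⟨t * s₀, S.mul_mem ht hs₀, fun x hx => ?_⟩
          have h2 : s₀ • j x = 0 := by
            rw [← hgk (j x)]
            simp only [LinearMap.comp_apply] at hx
            rw [hx, map_zero]
          have h3 : j (s₀ • x) = 0 := by rw [map_smul, h2]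
          simpa [mul_smul] using hker _ h3
        have hll := hB K (k ∘ₗ j) h1
        rw [isUSEpi_iff'] at hll ⊢
        obtain ⟨s, hs, H⟩ := hll
        refine ⟨s, hs, fun φ => ?_⟩
        obtain ⟨ψ, hψ⟩ := H φ
        refine ⟨ψ ∘ₗ k, ?_⟩
        ext x
        simpa using LinearMap.congr_fun hψ x
    · -- inj rel A ∧ inj rel C → inj rel B
      rintro ⟨hA, hC⟩
      intro K _ _ j hmono
      rw [isUSMono_iff'] at hmono
      obtain ⟨t, ht, hker⟩ := hmono
      set K₁ := LinearMap.ker (g ∘ₗ j) with hK₁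
      set i : K₁ →ₗ[R] K := (LinearMap.ker (g ∘ₗ j)).subtype with hi
      set j₁ : K₁ →ₗ[R] A := f' ∘ₗ (j ∘ₗ i) with hj₁
      have hfj₁ : ∀ x : K₁, f (j₁ x) = s₀ • j (i x) := by
        intro x
        have hx : g (j (i x)) = 0 := x.2
        have h9 := hkg (j (i x))
        rw [hx, map_zero] at h9
        exact (sub_eq_zero.mp h9.symm).symm
      have hj₁mono : IsUSMono R S j₁ := by
        rw [isUSMono_iff']
        refine ⟨t * s₀, S.mul_mem ht hs₀, fun x hx => ?_⟩
        have h3 : s₀ • j (i x) = 0 := by rw [← hfj₁ x, hx, map_zero]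
        have h4 : j (s₀ • i x) = 0 := by rw [map_smul, h3]
        have h5 := hker _ h4
        exact Subtype.ext (by simpa [mul_smul, hi] using h5)
      obtain ⟨s₁, hs₁, H₁⟩ := (isUSEpi_iff' R S _).1 (hA K₁ j₁ hj₁mono)
      set jbar : (K ⧸ K₁) →ₗ[R] C := Submodule.liftQ K₁ (g ∘ₗ j) le_rfl with hjbar
      have hjbarmono : IsUSMono R S jbar := by
        rw [isUSMono_iff']
        refine ⟨1, S.one_mem, fun q hq => ?_⟩
        obtain ⟨x, rfl⟩ := Submodule.Quotient.mk_surjective _ q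
        have hx : x ∈ K₁ := by simpa [hjbar, hK₁, LinearMap.mem_ker] using hq
        simp [Submodule.Quotient.mk_eq_zero, hx]
      obtain ⟨s₂, hs₂, H₂⟩ := (isUSEpi_iff' R S _).1 (hC (K ⧸ K₁) jbar hjbarmono)
      rw [isUSEpi_iff']
      refine ⟨s₂ * s₁, S.mul_mem hs₂ hs₁, fun φ => ?_⟩
      obtain ⟨ψ₁, hψ₁⟩ := H₁ (φ ∘ₗ i)
      have hkerθ : K₁ ≤ LinearMap.ker (s₁ • φ - ψ₁ ∘ₗ (f' ∘ₗ j)) := by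
        intro x hx
        have h8 : ψ₁ (j₁ ⟨x, hx⟩) = s₁ • φ (i ⟨x, hx⟩) := by
          simpa using LinearMap.congr_fun hψ₁ ⟨x, hx⟩
        simp only [hj₁, LinearMap.comp_apply, hi, Submodule.subtype_apply] at h8
        simp only [LinearMap.mem_ker, LinearMap.sub_apply, LinearMap.smul_apply,
          LinearMap.comp_apply]
        rw [← h8, sub_self]
      obtain ⟨ψ₂, hψ₂⟩ := H₂ (Submodule.liftQ K₁ _ hkerθ)
      refine ⟨ψ₂ ∘ₗ g + s₂ • (ψ₁ ∘ₗ f'), ?_⟩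
      ext x
      have h7 := LinearMap.congr_fun hψ₂ (Submodule.Quotient.mk x)
      simp only [LinearMap.lcomp_apply, LinearMap.comp_apply, hjbar,
        Submodule.liftQ_apply, LinearMap.smul_apply, LinearMap.sub_apply] at h7
      -- h7 : ψ₂ (g (j x)) = s₂ • (s₁ • φ x - ψ₁ (f' (j x)))
      simp only [LinearMap.lcomp_apply, LinearMap.add_apply, LinearMap.comp_apply,
        LinearMap.smul_apply, h7, smul_sub]
      rw [mul_smul]
      abel
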